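/- Let λ > 0, λ ≠ 1, and in ℝ⁴ consider X = {±e_i : 1≤i≤4} ∪ (1/2)·{-1,1}⁴ with weight 1, together with (λ/√2)·I⁴_2 with weight 1/λ⁶. Then (X,w) is a Euclidean 7-design of 48 points in ℝ⁴: Σ_{x∈X} w(x)‖x‖^{2s_1} f(x) = 0 for all homogeneous harmonic f of degree s with 1 ≤ s ≤ 7-2s_1, s_1 ≥ 0. -/

import Mathlib

/-- The set `I^n_k` of vectors in `{-1,0,1}^n ⊂ ℝⁿ` with squared norm `k`. -/
noncomputable def boxLayer (n k : ℕ) : Finset (Fin n → ℝ) :=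
  (Fintype.piFinset fun _ : Fin n => ({-1, 0, 1} : Finset ℝ)).filter
    fun x => ∑ i, x i ^ 2 = k

/-!
Multiplying the points by `2`, resp. by `√2 / λ`, turns the two layers into the shells of squared
norm `4` and `2` of `ℤ⁴`, so by homogeneity the weighted sum is
`2⁻ˢ P₄ f + λ^(2s₁-6) (λ/√2)^s P₂ f`, where `Pₘ f` is the sum of `f` over the shell of norm `m`.
For odd `s` both sums vanish by central symmetry. For even `s` everything is linear in `f`, so it
suffices to check identities on monomials: for `s ∈ {2, 4}` each shell satisfies
`s (s + 2) Pₘ p = m Pₘ (Δ p)`, and for `s = 6` (which forces `s₁ = 0` and the weight `1/8`)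
`6 (P₄ + 8 P₂) p = P₄ (Δ p)`. These are finitely many identities between integers, verified by
computation, and harmonicity makes their right-hand sides vanish.
-/

open Finset MvPolynomial

theorem Fintype.sum_piFinset_image_of_injective {ι α β M : Type*} [DecidableEq ι] [Fintype ι]
    [DecidableEq β] [AddCommMonoid M] {φ : α → β} (hφ : Function.Injective φ)
    (B : ι → Finset α) (g : (ι → β) → M) :
    ∑ x ∈ Fintype.piFinset (fun i => (B i).image φ), g x =
      ∑ z ∈ Fintype.piFinset B, g fun i => φ (z i) := by
  rw [Fintype.piFinset_image, sum_image]
  intro z _ w _ h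
  funext i
  exact hφ (congrFun h i)

namespace MvPolynomial

variable {σ R : Type*} [CommSemiring R]

theorem IsHomogeneous.eval_smul {f : MvPolynomial σ R} {n : ℕ} (hf : f.IsHomogeneous n)
    (c : R) (x : σ → R) : eval (c • x) f = c ^ n * eval x f := by
  rw [eval_eq, eval_eq, mul_sum]
  refine sum_congr rfl fun d hd => ?_
  have hdeg : ∑ i ∈ d.support, d i = n := by
    rw [← Finsupp.degree_apply]
    by_contra h
    exact mem_support_iff.mp hd (hf.coeff_eq_zero h)
  simp only [Pi.smul_apply, smul_eq_mul, mul_pow, prod_mul_distrib, prod_pow_eq_pow_sum, hdeg]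
  ring

theorem IsHomogeneous.linearMap_eq {M : Type*} [AddCommMonoid M] [Module R M]
    {L L' : MvPolynomial σ R →ₗ[R] M} {f : MvPolynomial σ R} {n : ℕ} (hf : f.IsHomogeneous n)
    (h : ∀ d : σ →₀ ℕ, d.degree = n → L (monomial d 1) = L' (monomial d 1)) : L f = L' f := by
  rw [f.as_sum, map_sum, map_sum]
  refine sum_congr rfl fun d hd => ?_
  have hdeg : d.degree = n := by
    by_contra h
    exact mem_support_iff.mp hd (hf.coeff_eq_zero h)
  rw [← mul_one (coeff d f), ← smul_eq_mul, ← smul_monomial, map_smul, map_smul, h d hdeg]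

variable [Fintype σ]

noncomputable def laplacian : MvPolynomial σ R →ₗ[R] MvPolynomial σ R :=
  ∑ i, (pderiv i).toLinearMap ∘ₗ (pderiv i).toLinearMap

theorem laplacian_apply (f : MvPolynomial σ R) : laplacian f = ∑ i, pderiv i (pderiv i f) := by
  simp [laplacian]

theorem laplacian_monomial (d : σ →₀ ℕ) (a : R) :
    laplacian (monomial d a) =
      ∑ i, monomial (d - Finsupp.single i 2) (a * ((d i * (d i - 1) : ℕ) : R)) := by
  rw [laplacian_apply]
  refine sum_congr rfl fun i _ => ?_
  have hsub : d - Finsupp.single i 1 - Finsupp.single i 1 = d - Finsupp.single i 2 := by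
    ext j
    rcases eq_or_ne i j with rfl | hij
    · simp only [Finsupp.coe_tsub, Pi.sub_apply, Finsupp.single_eq_same]
      omega
    · simp [Finsupp.single_eq_of_ne' hij]
  simp [pderiv_monomial, hsub, mul_assoc]

theorem IsHomogeneous.map_eq_zero_of_laplacian_eq_zero {M : Type*} [AddCommMonoid M]
    [Module R M] {f : MvPolynomial σ R} {n : ℕ} (hf : f.IsHomogeneous n) (hΔ : laplacian f = 0)
    {L L' : MvPolynomial σ R →ₗ[R] M}
    (h : ∀ d : σ →₀ ℕ, d.degree = n → L (monomial d 1) = L' (laplacian (monomial d 1))) :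
    L f = 0 := by
  rw [hf.linearMap_eq (L' := L' ∘ₗ laplacian) h, LinearMap.comp_apply, hΔ, map_zero]

end MvPolynomial

section PointSum

variable {σ : Type*}

noncomputable def pointSum (S : Finset (σ → ℤ)) : MvPolynomial σ ℝ →ₗ[ℝ] ℝ :=
  ∑ z ∈ S, (aeval fun i => (z i : ℝ)).toLinearMap

theorem pointSum_apply (S : Finset (σ → ℤ)) (f : MvPolynomial σ ℝ) :
    pointSum S f = ∑ z ∈ S, eval (fun i => (z i : ℝ)) f := by
  simp [pointSum]

theorem pointSum_eq_zero_of_odd {S : Finset (σ → ℤ)} (hS : ∀ z ∈ S, -z ∈ S)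
    {f : MvPolynomial σ ℝ} {n : ℕ} (hf : f.IsHomogeneous n) (hn : Odd n) : pointSum S f = 0 := by
  have hneg : ∀ z : σ → ℤ, eval (fun i => ((-z) i : ℝ)) f = -eval (fun i => (z i : ℝ)) f := by
    intro z
    have : (fun i => ((-z) i : ℝ)) = (-1 : ℝ) • fun i => (z i : ℝ) := by ext; simp
    rw [this, hf.eval_smul, hn.neg_one_pow, neg_one_mul]
  have hflip : pointSum S f = -pointSum S f := by
    rw [pointSum_apply, ← sum_neg_distrib]
    exact sum_nbij' Neg.neg Neg.neg hS hS (fun z _ => neg_neg z) (fun z _ => neg_neg z)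
      fun z _ => by rw [hneg, neg_neg]
  linarith

variable [Fintype σ]

def moment (S : Finset (σ → ℤ)) (a : σ → ℕ) : ℤ :=
  ∑ z ∈ S, ∏ i, z i ^ a i

-- The truncated subtraction is harmless: the coefficient vanishes when `a j < 2`.
def laplacianMoment [DecidableEq σ] (S : Finset (σ → ℤ)) (a : σ → ℕ) : ℤ :=
  ∑ j, ((a j * (a j - 1) : ℕ) : ℤ) * moment S (a - Pi.single j 2)

theorem pointSum_monomial (S : Finset (σ → ℤ)) (d : σ →₀ ℕ) :
    pointSum S (monomial d 1) = moment S d := by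
  simp [pointSum_apply, moment, eval_monomial, Finsupp.prod_fintype]

theorem pointSum_laplacian_monomial [DecidableEq σ] (S : Finset (σ → ℤ)) (d : σ →₀ ℕ) :
    pointSum S (laplacian (monomial d 1)) = laplacianMoment S d := by
  rw [laplacian_monomial, map_sum, laplacianMoment, Int.cast_sum]
  refine sum_congr rfl fun j _ => ?_
  rw [one_mul, ← mul_one ((_ : ℕ) : ℝ), ← smul_eq_mul, ← smul_monomial, map_smul,
    pointSum_monomial, Finsupp.coe_tsub, Finsupp.single_eq_pi_single, smul_eq_mul]
  push_cast
  rfl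

end PointSum

-- For `m ≤ 4` this is the set of all vectors of `ℤ⁴` of squared norm `m`: `shell 2` is `I⁴₂`, the
-- root system `D₄`, and `shell 4 = {±2eᵢ} ∪ {±1}⁴` is twice the set of minimal vectors of `D₄*`.
def shell (m : ℕ) : Finset (Fin 4 → ℤ) :=
  (Fintype.piFinset fun _ => ({-2, -1, 0, 1, 2} : Finset ℤ)).filter fun z => ∑ i, z i ^ 2 = m

theorem neg_mem_shell {m : ℕ} {z : Fin 4 → ℤ} (hz : z ∈ shell m) : -z ∈ shell m := by
  simp only [shell, mem_filter, Fintype.mem_piFinset, mem_insert, mem_singleton, Pi.neg_apply,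
    neg_sq] at hz ⊢
  refine ⟨fun i => ?_, hz.2⟩
  have := hz.1 i
  omega

theorem sum_shell_four {M : Type*} [AddCommMonoid M] (g : (Fin 4 → ℤ) → M) :
    ∑ z ∈ shell 4, g z = ∑ i, (g (Pi.single i 2) + g (Pi.single i (-2))) +
      ∑ ε ∈ Fintype.piFinset (fun _ => ({-1, 1} : Finset ℤ)), g ε := by
  have hdecomp : shell 4 = (univ.image fun i => Pi.single i 2) ∪
      (univ.image fun i => Pi.single i (-2)) ∪ Fintype.piFinset fun _ => {-1, 1} := by
    decide +kernel
  have hdisj₁ : Disjoint (univ.image fun i : Fin 4 => (Pi.single i 2 : Fin 4 → ℤ))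
      (univ.image fun i => Pi.single i (-2)) := by
    decide +kernel
  have hdisj₂ : Disjoint ((univ.image fun i : Fin 4 => (Pi.single i 2 : Fin 4 → ℤ)) ∪
      (univ.image fun i => Pi.single i (-2))) (Fintype.piFinset fun _ => {-1, 1}) := by
    decide +kernel
  have hinj {c : ℤ} (hc : c ≠ 0) :
      Function.Injective fun i : Fin 4 => (Pi.single i c : Fin 4 → ℤ) := by
    intro i j hij
    by_contra hne
    simpa [hc, hne] using congrFun hij i
  rw [hdecomp, sum_union hdisj₂, sum_union hdisj₁, sum_image (hinj two_ne_zero).injOn,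
    sum_image (hinj (by norm_num)).injOn, sum_add_distrib]

-- The mean value formula `∫_{S³} p = ∫_{S³} Δp / (s (s + 2))` for `p` of degree `s`, transported to
-- the shells, which are spherical 5-designs of radius `√m`.
theorem moment_shell_eq_laplacianMoment :
    ∀ m ∈ ({2, 4} : Finset ℕ), ∀ s ∈ ({2, 4} : Finset ℕ), ∀ a ∈ Nat.antidiagonalTuple 4 s,
      ((s * (s + 2) : ℕ) : ℤ) * moment (shell m) a = m * laplacianMoment (shell m) a := by
  decide +kernel

theorem moment_shell_four_add_eight_mul_eq_laplacianMoment : ∀ a ∈ Nat.antidiagonalTuple 4 6,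
    6 * (moment (shell 4) a + 8 * moment (shell 2) a) = laplacianMoment (shell 4) a := by
  decide +kernel

section Shell

variable {f : MvPolynomial (Fin 4) ℝ} {s : ℕ}

theorem pointSum_shell_eq_zero {m : ℕ} (hm : m ∈ ({2, 4} : Finset ℕ))
    (hs : s ∈ ({2, 4} : Finset ℕ)) (hf : f.IsHomogeneous s) (hΔ : laplacian f = 0) :
    pointSum (shell m) f = 0 := by
  have hsum : ((s * (s + 2) : ℕ) : ℝ) • pointSum (shell m) f = 0 := by
    refine hf.map_eq_zero_of_laplacian_eq_zero hΔ
      (L := ((s * (s + 2) : ℕ) : ℝ) • pointSum (shell m)) (L' := (m : ℝ) • pointSum (shell m))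
      fun d hd => ?_
    have ha : ⇑d ∈ Nat.antidiagonalTuple 4 s := by
      rwa [Nat.mem_antidiagonalTuple, ← Finsupp.degree_eq_sum]
    simp only [LinearMap.smul_apply, pointSum_monomial, pointSum_laplacian_monomial, smul_eq_mul]
    exact_mod_cast moment_shell_eq_laplacianMoment m hm s hs d ha
  refine (smul_eq_zero.mp hsum).resolve_left ?_
  simp only [mem_insert, mem_singleton] at hs
  rcases hs with rfl | rfl <;> norm_num

theorem pointSum_shell_four_add_eight_mul_eq_zero (hf : f.IsHomogeneous 6) (hΔ : laplacian f = 0) :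
    pointSum (shell 4) f + 8 * pointSum (shell 2) f = 0 := by
  refine hf.map_eq_zero_of_laplacian_eq_zero hΔ
    (L := pointSum (shell 4) + (8 : ℝ) • pointSum (shell 2))
    (L' := (6⁻¹ : ℝ) • pointSum (shell 4)) fun d hd => ?_
  have ha : ⇑d ∈ Nat.antidiagonalTuple 4 6 := by
    rwa [Nat.mem_antidiagonalTuple, ← Finsupp.degree_eq_sum]
  have key : (6 * (moment (shell 4) d + 8 * moment (shell 2) d) : ℝ) =
      laplacianMoment (shell 4) d := by
    exact_mod_cast moment_shell_four_add_eight_mul_eq_laplacianMoment d ha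
  simp only [LinearMap.add_apply, LinearMap.smul_apply, pointSum_monomial,
    pointSum_laplacian_monomial, smul_eq_mul]
  linarith

theorem sum_boxLayer_eval_mul (hf : f.IsHomogeneous s) (c : ℝ) :
    ∑ x ∈ boxLayer 4 2, eval (fun i => c * x i) f = c ^ s * pointSum (shell 2) f := by
  have hB : ({-1, 0, 1} : Finset ℝ) = ({-1, 0, 1} : Finset ℤ).image (↑) := by simp
  have hshell : shell 2 = (Fintype.piFinset fun _ => ({-1, 0, 1} : Finset ℤ)).filter
      fun z => ∑ i, z i ^ 2 = 2 := by
    decide +kernel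
  rw [boxLayer, hB, sum_filter, Fintype.sum_piFinset_image_of_injective Int.cast_injective,
    pointSum_apply, hshell, sum_filter, mul_sum]
  refine sum_congr rfl fun z _ => ?_
  have hnorm : (∑ i, ((z i : ℤ) : ℝ) ^ 2 = ((2 : ℕ) : ℝ)) ↔ ∑ i, z i ^ 2 = 2 := by
    exact_mod_cast Iff.rfl
  have heval : eval (fun i => c * (z i : ℝ)) f = c ^ s * eval (fun i => (z i : ℝ)) f :=
    hf.eval_smul c _
  simp only [hnorm, heval, mul_ite, mul_zero]

theorem pointSum_shell_four_eq (hf : f.IsHomogeneous s) :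
    pointSum (shell 4) f = 2 ^ s *
      ((∑ i : Fin 4, (eval (Pi.single i 1) f + eval (-Pi.single i 1) f)) +
        ∑ ε ∈ Fintype.piFinset (fun _ : Fin 4 => ({-1, 1} : Finset ℝ)),
          eval (fun i => ε i / 2) f) := by
  have hB : ({-1, 1} : Finset ℝ) = ({-1, 1} : Finset ℤ).image (↑) := by simp
  have hhalf (x : Fin 4 → ℤ) :
      eval (fun j => (x j : ℝ)) f = 2 ^ s * eval (fun j => (x j : ℝ) / 2) f := by
    rw [← hf.eval_smul]
    congr
    ext j
    simp [mul_div_cancel₀]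
  have hsingle (i : Fin 4) (c : ℤ) :
      (fun j => ((Pi.single i c : Fin 4 → ℤ) j : ℝ) / 2) = Pi.single i ((c : ℝ) / 2) := by
    ext j
    rcases eq_or_ne j i with rfl | hji <;> simp [*]
  rw [pointSum_apply, sum_shell_four, hB,
    Fintype.sum_piFinset_image_of_injective Int.cast_injective, mul_add, mul_sum, mul_sum]
  simp only [hhalf, hsingle, ← Pi.single_neg, mul_add]
  norm_num

end Shell

open MvPolynomial in
theorem d4_tight_7design_general (l : ℝ) (hl : 0 < l)
    (s s₁ : ℕ) (hs : 1 ≤ s) (hts : s + 2 * s₁ ≤ 7)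
    (f : MvPolynomial (Fin 4) ℝ) (hf : f.IsHomogeneous s)
    (hharm : ∑ i : Fin 4, pderiv i (pderiv i f) = 0) :
    (∑ i : Fin 4, ((1 : ℝ) * (1 : ℝ) ^ (2 * s₁) * eval (Pi.single i (1 : ℝ)) f
        + (1 : ℝ) * (1 : ℝ) ^ (2 * s₁) * eval (-(Pi.single i (1 : ℝ))) f))
      + ∑ ε ∈ Fintype.piFinset (fun _ : Fin 4 => ({-1, 1} : Finset ℝ)),
          (1 : ℝ) * (1 : ℝ) ^ (2 * s₁) * eval (fun i => ε i / 2) f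
      + ∑ x ∈ boxLayer 4 2,
          (1 / l ^ 6) * l ^ (2 * s₁) * eval (fun i => l / Real.sqrt 2 * x i) f
      = 0 := by
  have hΔ : laplacian f = 0 := (laplacian_apply f).trans hharm
  have hP₄ := pointSum_shell_four_eq hf
  simp only [one_pow, one_mul, ← mul_sum, sum_boxLayer_eval_mul hf]
  obtain ⟨h₄, h₂⟩ | ⟨rfl, rfl⟩ :
      (pointSum (shell 4) f = 0 ∧ pointSum (shell 2) f = 0) ∨ (s = 6 ∧ s₁ = 0) := by
    rcases Nat.even_or_odd s with ⟨k, rfl⟩ | hodd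
    · by_cases hk : k = 3
      · exact .inr ⟨by omega, by omega⟩
      · have hs' : k + k ∈ ({2, 4} : Finset ℕ) := by
          simp only [mem_insert, mem_singleton]
          omega
        exact .inl ⟨pointSum_shell_eq_zero (by simp) hs' hf hΔ,
          pointSum_shell_eq_zero (by simp) hs' hf hΔ⟩
    · exact .inl ⟨pointSum_eq_zero_of_odd (fun _ => neg_mem_shell) hf hodd,
        pointSum_eq_zero_of_odd (fun _ => neg_mem_shell) hf hodd⟩
  · rw [h₄] at hP₄
    rw [h₂, mul_zero, mul_zero, add_zero]
    simpa using hP₄.symm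
  · have h₆ := pointSum_shell_four_add_eight_mul_eq_zero hf hΔ
    have hsqrt : Real.sqrt 2 ^ 6 = 8 := by
      rw [show Real.sqrt 2 ^ 6 = (Real.sqrt 2 ^ 2) ^ 3 by ring, Real.sq_sqrt zero_le_two]
      norm_num
    rw [div_pow, hsqrt]
    field_simp
    linear_combination (h₆ - hP₄) / 8

open MvPolynomial in
/-- The minimal vectors of `D₄*` (namely `{±e_i} ∪ (1/2)·{-1,1}⁴`, weight 1) together
with the scaled minimal vectors `(λ/√2)·I⁴₂` of `D₄` (weight `1/λ⁶`) form a
Euclidean 7-design of 48 points in `ℝ⁴` (Neumaier–Seidel criterion). -/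
theorem d4_tight_7design (l : ℝ) (hl : 0 < l) (hl1 : l ≠ 1)
    (s s₁ : ℕ) (hs : 1 ≤ s) (hts : s + 2 * s₁ ≤ 7)
    (f : MvPolynomial (Fin 4) ℝ) (hf : f.IsHomogeneous s)
    (hharm : ∑ i : Fin 4, pderiv i (pderiv i f) = 0) :
    (∑ i : Fin 4, ((1 : ℝ) * (1 : ℝ) ^ (2 * s₁) * eval (Pi.single i (1 : ℝ)) f
        + (1 : ℝ) * (1 : ℝ) ^ (2 * s₁) * eval (-(Pi.single i (1 : ℝ))) f))
      + ∑ ε ∈ Fintype.piFinset (fun _ : Fin 4 => ({-1, 1} : Finset ℝ)),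
          (1 : ℝ) * (1 : ℝ) ^ (2 * s₁) * eval (fun i => ε i / 2) f
      + ∑ x ∈ boxLayer 4 2,
          (1 / l ^ 6) * l ^ (2 * s₁) * eval (fun i => l / Real.sqrt 2 * x i) f
      = 0 :=
  d4_tight_7design_general l hl s s₁ hs hts f hf hharm
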